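/- arXiv:1606.03137 — 2 statements merged into one kernel-verified Lean document; each statement's English description precedes it below -/
import Mathlib

section
/- In the two-phase paperclip–staple game with θ uniform on [0,1], among human threshold strategies signaling 'middle' iff θ ∈ [1/2−t, 1/2+t] (with the robot best-responding to the induced posterior mean, and the human also receiving her own greedy action reward in phase one), the expected total reward is maximized at t = 5/92; i.e., the optimal human policy selects the middle action (1,1) on the interval [41/92, 51/92], which has positive length. Hence the expert policy (t = 0) is not a best response. -/
open MeasureTheory intervalIntegral

/-- Human's phase-1 reward under the threshold-`t` strategy: she plays `(0,2)`
if `θ < 1/2−t`, `(1,1)` if `|θ−1/2| ≤ t`, `(2,0)` if `θ > 1/2+t`, with reward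
`θp + (1−θ)q`. -/
noncomputable def rH (θ t : ℝ) : ℝ :=
  if θ < 1/2 - t then 2 * (1 - θ) else if θ ≤ 1/2 + t then 1 else 2 * θ

/-- Robot's phase-2 reward: it best-responds to the posterior mean induced by
the human's signal (for `t < 1/9`: `(0,90)`, `(50,50)`, `(90,0)` on the
low/middle/high signals), with reward `θp + (1−θ)q`. -/
noncomputable def rR (θ t : ℝ) : ℝ :=
  if θ < 1/2 - t then 90 * (1 - θ) else if θ ≤ 1/2 + t then 50 else 90 * θ

/-- Total expected value of the two-phase game under the threshold-`t` human
strategy with robot best response, `θ ~ Uniform[0,1]`. -/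
noncomputable def V (t : ℝ) : ℝ := ∫ θ in (0:ℝ)..1, (rH θ t + rR θ t)

/-!
Adding the two phases, the payoff is `92 (1 - θ)` below the middle interval, `51` on it and
`92 θ` above it. Integrating piece by piece gives `V t = 69 + 10 t - 92 t²`, a concave parabola
with vertex at `t = 5/92`.
-/

open Set

theorem intervalIntegral.integral_ite_eq_add_adjacent_intervals {E : Type*}
    [NormedAddCommGroup E] [NormedSpace ℝ E] {μ : Measure ℝ} [NullSingletonClass μ]
    {f g h : ℝ → E} {a b c d : ℝ}
    (hab : a ≤ b) (hbc : b ≤ c) (hcd : c ≤ d) (hf : IntervalIntegrable f μ a b)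
    (hg : IntervalIntegrable g μ b c) (hh : IntervalIntegrable h μ c d) :
    ∫ x in a..d, (if x < b then f x else if x ≤ c then g x else h x) ∂μ =
      (∫ x in a..b, f x ∂μ) + (∫ x in b..c, g x ∂μ) + ∫ x in c..d, h x ∂μ := by
  set F := fun x => if x < b then f x else if x ≤ c then g x else h x
  have hFf : EqOn f F (Ioo a b) := fun x hx => by simp [F, hx.2]
  have hFg : EqOn g F (Ioo b c) := fun x hx => by simp [F, hx.1.not_gt, hx.2.le]
  have hFh : EqOn h F (Ioo c d) := fun x hx => by
    simp [F, (hbc.trans_lt hx.1).not_gt, hx.1]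
  have hFab := hf.congr_uIoo (uIoo_of_le hab ▸ hFf)
  have hFbc := hg.congr_uIoo (uIoo_of_le hbc ▸ hFg)
  have hFcd := hh.congr_uIoo (uIoo_of_le hcd ▸ hFh)
  rw [← integral_add_adjacent_intervals (hFab.trans hFbc) hFcd,
    ← integral_add_adjacent_intervals hFab hFbc, integral_congr_Ioo_of_le hab hFf,
    integral_congr_Ioo_of_le hbc hFg, integral_congr_Ioo_of_le hcd hFh]

lemma rH_add_rR (θ t : ℝ) :
    rH θ t + rR θ t =
      if θ < 1/2 - t then 92 * (1 - θ) else if θ ≤ 1/2 + t then 51 else 92 * θ := by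
  unfold rH rR
  split_ifs <;> ring

lemma V_eq (t : ℝ) (ht₀ : 0 ≤ t) (ht : t ≤ 1/2) : V t = 69 + 10 * t - 92 * t ^ 2 := by
  simp_rw [V, rH_add_rR]
  rw [integral_ite_eq_add_adjacent_intervals (by linarith) (by linarith) (by linarith)
    ((by fun_prop : Continuous fun θ : ℝ => 92 * (1 - θ)).intervalIntegrable _ _)
    intervalIntegrable_const ((continuous_const_mul (92 : ℝ)).intervalIntegrable _ _),
    intervalIntegral.integral_const_mul, intervalIntegral.integral_const_mul,
    integral_comp_sub_left fun x => x, integral_id, integral_id, intervalIntegral.integral_const,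
    smul_eq_mul]
  ring

lemma V_eq_sub_sq (t : ℝ) (ht₀ : 0 ≤ t) (ht : t ≤ 1/2) :
    V t = V (5/92) - 92 * (t - 5/92) ^ 2 := by
  rw [V_eq t ht₀ ht, V_eq (5/92) (by norm_num) (by norm_num)]
  ring

/-- In the two-phase paperclip–staple game with `θ` uniform on `[0,1]`, among
human threshold strategies the expected total reward is maximized at
`t = 5/92`; the corresponding middle interval `[41/92, 51/92]` has positive
length, and the expert policy (`t = 0`) is strictly worse, hence not a best
response. -/
theorem optimal_threshold_is_five_ninetyseconds :
    (∀ t : ℝ, 0 ≤ t → t < 1/9 → V t ≤ V (5/92)) ∧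
    ((1:ℝ)/2 - 5/92 = 41/92 ∧ (1:ℝ)/2 + 5/92 = 51/92 ∧ (0:ℝ) < 51/92 - 41/92) ∧
    V 0 < V (5/92) := by
  refine ⟨fun t ht₀ ht => ?_, by norm_num, ?_⟩
  · rw [V_eq_sub_sq t ht₀ (by linarith)]
    linarith [sq_nonneg (t - 5/92)]
  · rw [V_eq_sub_sq 0 le_rfl (by norm_num)]
    norm_num
end

section
/- A two-player Markov game with identical payoffs in which one player observes a static hidden parameter θ at the start (a CIRL game) can be reduced to a single-agent POMDP whose hidden state space is S × Θ: for every policy pair in the game there is a policy in the POMDP achieving the same expected sum of discounted rewards. -/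
open Finset

/-- `n`-step expected discounted value of a policy pair `(πH, πR)` in a CIRL
game, from history `h`, world state `s`, and reward parameter `θ`.  The human
observes `θ`; both players observe all states and both actions. -/
noncomputable def valG {S AH AR Θ : Type*} [Fintype S]
    (T : S → AH → AR → S → ℝ) (R : S → AH → AR → Θ → ℝ) (γ : ℝ)
    (πH : List (S × AH × AR) → S → Θ → AH)
    (πR : List (S × AH × AR) → S → AR) :
    ℕ → List (S × AH × AR) → S → Θ → ℝ
  | 0, _, _, _ => 0
  | n + 1, h, s, θ =>
      R s (πH h s θ) (πR h s) θ +
        γ * ∑ s' : S, T s (πH h s θ) (πR h s) s' *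
          valG T R γ πH πR n (h ++ [(s, πH h s θ, πR h s)]) s' θ

/-- `n`-step expected discounted value of a coordinator policy `σ` in the
coordinator POMDP: hidden state `(s, θ) ∈ S × Θ`, actions are pairs of a map
`Θ → AH` and a robot action in `AR`, and the observations are the world state
and the human's realized action. -/
noncomputable def valC {S AH AR Θ : Type*} [Fintype S]
    (T : S → AH → AR → S → ℝ) (R : S → AH → AR → Θ → ℝ) (γ : ℝ)
    (σ : List (S × AH) → S → (Θ → AH) × AR) :
    ℕ → List (S × AH) → S → Θ → ℝ
  | 0, _, _, _ => 0
  | n + 1, h, s, θ =>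
      R s ((σ h s).1 θ) (σ h s).2 θ +
        γ * ∑ s' : S, T s ((σ h s).1 θ) (σ h s).2 s' *
          valC T R γ σ n (h ++ [(s, (σ h s).1 θ)]) s' θ

/-- Reconstruct the full game history from a coordinator history, filling in
the robot actions prescribed by `πR`. -/
def reconstruct {S AH AR : Type*} (πR : List (S × AH × AR) → S → AR) :
    List (S × AH × AR) → List (S × AH) → List (S × AH × AR)
  | acc, [] => acc
  | acc, (s, a) :: t => reconstruct πR (acc ++ [(s, a, πR acc s)]) t

lemma reconstruct_append {S AH AR : Type*} (πR : List (S × AH × AR) → S → AR)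
    (l : List (S × AH)) (s : S) (a : AH) : ∀ acc,
    reconstruct πR acc (l ++ [(s, a)]) =
      reconstruct πR acc l ++ [(s, a, πR (reconstruct πR acc l) s)] := by
  induction l with
  | nil => intro acc; simp [reconstruct]
  | cons p t ih =>
      intro acc
      obtain ⟨s', a'⟩ := p
      simp only [List.cons_append, reconstruct]
      exact ih _

/-- A CIRL game (two-player Markov game with identical payoffs in which the
human observes the static parameter `θ` at the start) reduces to a single-agent
POMDP with hidden state space `S × Θ`: for every policy pair there is a
coordinator-POMDP policy achieving the same expected sum of discounted rewards
(at every horizon). -/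
theorem cirl_reduces_to_coordinator_pomdp
    {S AH AR Θ : Type*} [Fintype S] [Fintype AH] [Fintype AR] [Fintype Θ]
    (T : S → AH → AR → S → ℝ)
    (hT0 : ∀ s aH aR s', 0 ≤ T s aH aR s')
    (hT1 : ∀ s aH aR, ∑ s' : S, T s aH aR s' = 1)
    (R : S → AH → AR → Θ → ℝ)
    (P0 : S → Θ → ℝ) (hP0 : ∀ s θ, 0 ≤ P0 s θ)
    (hP1 : ∑ s : S, ∑ θ : Θ, P0 s θ = 1)
    (γ : ℝ) (hγ0 : 0 ≤ γ) (hγ1 : γ < 1)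
    (πH : List (S × AH × AR) → S → Θ → AH)
    (πR : List (S × AH × AR) → S → AR) :
    ∃ σ : List (S × AH) → S → (Θ → AH) × AR,
      ∀ n : ℕ,
        ∑ s : S, ∑ θ : Θ, P0 s θ * valG T R γ πH πR n [] s θ
          = ∑ s : S, ∑ θ : Θ, P0 s θ * valC T R γ σ n [] s θ := by
  refine ⟨fun h s => (πH (reconstruct πR [] h) s, πR (reconstruct πR [] h) s), fun n => ?_⟩
  have key : ∀ n h s θ, valC T R γ
      (fun h s => (πH (reconstruct πR [] h) s, πR (reconstruct πR [] h) s)) n h s θ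
      = valG T R γ πH πR n (reconstruct πR [] h) s θ := by
    intro n
    induction n with
    | zero => intro h s θ; simp [valC, valG]
    | succ n ih =>
      intro h s θ
      simp only [valC, valG, ih, reconstruct_append]
  simp [key, reconstruct]
end
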